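/- The function N_b, defined on rooted binary trees by N_b(T) = Σ_{v internal} n_{v_b} (the sum of the smaller child-subtree leaf counts), is a balance index: for every n ≥ 1 the caterpillar tree is its unique minimizer among rooted binary trees with n leaves, and for every n = 2^h the fully balanced tree of height h is its unique maximizer. -/

import Mathlib

/-- Rooted binary trees: a leaf, or an internal vertex with two child subtrees. -/
inductive BTree where
  | leaf : BTree
  | node : BTree → BTree → BTree
deriving DecidableEq

namespace BTree

/-- Number of leaves of a rooted binary tree. -/
def numLeaves : BTree → ℕ
  | leaf => 1
  | node l r => numLeaves l + numLeaves r

/-- Sackin index: sum over internal vertices `v` of `n_{v_a} + n_{v_b}`. -/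
def sackin : BTree → ℕ
  | leaf => 0
  | node l r => sackin l + sackin r + (numLeaves l + numLeaves r)

/-- Colless index: sum over internal vertices `v` of `|n_{v_a} - n_{v_b}|`. -/
def colless : BTree → ℕ
  | leaf => 0
  | node l r =>
      colless l + colless r +
        (max (numLeaves l) (numLeaves r) - min (numLeaves l) (numLeaves r))

/-- `N_a`: sum over internal vertices of the larger child-subtree leaf count. -/
def Na : BTree → ℕ
  | leaf => 0
  | node l r => Na l + Na r + max (numLeaves l) (numLeaves r)

/-- `N_b`: sum over internal vertices of the smaller child-subtree leaf count. -/
def Nb : BTree → ℕ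
  | leaf => 0
  | node l r => Nb l + Nb r + min (numLeaves l) (numLeaves r)

/-- `Δ_CS = C - S`, as an integer. -/
def deltaCS (T : BTree) : ℤ := (colless T : ℤ) - (sackin T : ℤ)

/-- Caterpillar trees: every internal vertex has at least one leaf child. -/
def isCaterpillar : BTree → Prop
  | leaf => True
  | node l r => (l = leaf ∧ isCaterpillar r) ∨ (r = leaf ∧ isCaterpillar l)

/-- The fully balanced tree of height `h`. -/
def fbTree : ℕ → BTree
  | 0 => leaf
  | h + 1 => node (fbTree h) (fbTree h)

end BTree

namespace BTree

/-- The caterpillar tree on `n` leaves. -/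
def catTree : ℕ → BTree
  | 0 => leaf
  | 1 => leaf
  | n + 2 => node leaf (catTree (n + 1))

end BTree

namespace BTreeAux
open BTree

lemma one_le_numLeaves : ∀ T : BTree, 1 ≤ T.numLeaves
  | .leaf => le_refl 1
  | .node l r => by
      have := one_le_numLeaves l; have := one_le_numLeaves r
      simp only [numLeaves]; omega

lemma eq_leaf_of_numLeaves_eq_one : ∀ T : BTree, T.numLeaves = 1 → T = .leaf
  | .leaf, _ => rfl
  | .node l r, h => by
      have := one_le_numLeaves l; have := one_le_numLeaves r
      simp only [numLeaves] at h; omega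

lemma numLeaves_catTree : ∀ n, 1 ≤ n → (catTree n).numLeaves = n
  | 1, _ => rfl
  | n + 2, _ => by
      simp only [catTree, numLeaves, numLeaves_catTree (n + 1) (by omega)]
      omega

lemma Nb_catTree : ∀ n, 1 ≤ n → Nb (catTree n) + 1 = n
  | 1, _ => rfl
  | n + 2, _ => by
      have h1 := numLeaves_catTree (n + 1) (by omega)
      have h2 := Nb_catTree (n + 1) (by omega)
      simp only [catTree, Nb, numLeaves, h1]
      omega

lemma numLeaves_le_Nb_succ : ∀ T : BTree, T.numLeaves ≤ Nb T + 1
  | .leaf => le_refl 1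
  | .node l r => by
      have := numLeaves_le_Nb_succ l; have := numLeaves_le_Nb_succ r
      have := one_le_numLeaves l; have := one_le_numLeaves r
      simp only [numLeaves, Nb]; omega

lemma Nb_of_isCaterpillar : ∀ T : BTree, isCaterpillar T → Nb T + 1 = T.numLeaves
  | .leaf, _ => rfl
  | .node l r, h => by
      rcases h with ⟨hl, hr⟩ | ⟨hr, hl⟩
      · subst hl
        have := Nb_of_isCaterpillar r hr
        have := one_le_numLeaves r
        simp only [Nb, numLeaves]; omega
      · subst hr
        have := Nb_of_isCaterpillar l hl
        have := one_le_numLeaves l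
        simp only [Nb, numLeaves]; omega

lemma isCaterpillar_of_Nb : ∀ T : BTree, Nb T + 1 = T.numLeaves → isCaterpillar T
  | .leaf, _ => trivial
  | .node l r, h => by
      have hl := numLeaves_le_Nb_succ l
      have hr := numLeaves_le_Nb_succ r
      have h1 := one_le_numLeaves l; have h2 := one_le_numLeaves r
      simp only [Nb, numLeaves] at h
      simp only [isCaterpillar]
      have hmin : min l.numLeaves r.numLeaves = 1 := by omega
      have hll : Nb l + 1 = l.numLeaves := by omega
      have hrr : Nb r + 1 = r.numLeaves := by omega
      rcases (by omega : l.numLeaves = 1 ∨ r.numLeaves = 1) with h' | h'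
      · exact Or.inl ⟨eq_leaf_of_numLeaves_eq_one l h', isCaterpillar_of_Nb r hrr⟩
      · exact Or.inr ⟨eq_leaf_of_numLeaves_eq_one r h', isCaterpillar_of_Nb l hll⟩

lemma numLeaves_fbTree : ∀ h, (fbTree h).numLeaves = 2 ^ h
  | 0 => rfl
  | h + 1 => by
      simp only [fbTree, numLeaves, numLeaves_fbTree h, pow_succ]; ring

lemma two_mul_Nb_fbTree : ∀ h, 2 * Nb (fbTree h) = h * 2 ^ h
  | 0 => rfl
  | h + 1 => by
      have ih := two_mul_Nb_fbTree h
      simp only [fbTree, Nb, numLeaves_fbTree h, min_self, pow_succ]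
      nlinarith [ih]

open Real in
lemma gmono {a : ℝ} (ha : 0 < a) :
    StrictMonoOn (fun x : ℝ => (x + a) * Real.log (x + a) - x * Real.log x) (Set.Ici a) := by
  apply strictMonoOn_of_deriv_pos (convex_Ici a)
  · apply ContinuousOn.sub
    · apply ContinuousOn.mul (by fun_prop)
      apply Real.continuousOn_log.comp (by fun_prop)
      intro x hx
      simp only [Set.mem_Ici] at hx
      simp only [Set.mem_compl_iff, Set.mem_singleton_iff]
      nlinarith
    · apply ContinuousOn.mul continuousOn_id
      apply Real.continuousOn_log.mono
      intro x hx
      simp only [Set.mem_Ici] at hx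
      simp only [Set.mem_compl_iff, Set.mem_singleton_iff]
      nlinarith
  · intro x hx
    rw [interior_Ici] at hx
    have hx0 : 0 < x := ha.trans hx
    have hxa : (0:ℝ) < x + a := by linarith
    have hA : HasDerivAt (fun x : ℝ => (x + a) * Real.log (x + a))
        ((Real.log (x + a) + 1) * 1) x :=
      (Real.hasDerivAt_mul_log hxa.ne').comp (h := fun y : ℝ => y + a) x ((hasDerivAt_id x).add_const a)
    have hB := Real.hasDerivAt_mul_log hx0.ne'
    have hD := hA.sub hB
    rw [show deriv (fun x => (x + a) * Real.log (x + a) - x * Real.log x) x = _ from hD.deriv]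
    have := Real.log_lt_log hx0 (by linarith : x < x + a)
    linarith

lemma key_lt {a b : ℝ} (ha : 0 < a) (hab : a < b) :
    a * Real.log a + b * Real.log b + 2 * a * Real.log 2 < (a + b) * Real.log (a + b) := by
  have h := gmono ha (Set.self_mem_Ici) (Set.mem_Ici.mpr hab.le) hab
  simp only at h
  have h2 : Real.log (a + a) = Real.log 2 + Real.log a := by
    rw [← two_mul, Real.log_mul two_ne_zero ha.ne']
  rw [h2] at h
  have hcomm : b + a = a + b := by ring
  rw [hcomm] at h
  nlinarith [h]

lemma key_eq {a : ℝ} (ha : 0 < a) :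
    a * Real.log a + a * Real.log a + 2 * a * Real.log 2 = (a + a) * Real.log (a + a) := by
  have h2 : Real.log (a + a) = Real.log 2 + Real.log a := by
    rw [← two_mul, Real.log_mul two_ne_zero ha.ne']
  rw [h2]; ring

lemma key_le {a b : ℝ} (ha : 0 < a) (hab : a ≤ b) :
    a * Real.log a + b * Real.log b + 2 * a * Real.log 2 ≤ (a + b) * Real.log (a + b) := by
  rcases eq_or_lt_of_le hab with h | h
  · subst h; exact le_of_eq (key_eq ha)
  · exact (key_lt ha h).le

lemma Nb_le_real : ∀ T : BTree,
    2 * Real.log 2 * (Nb T : ℝ) ≤ (T.numLeaves : ℝ) * Real.log (T.numLeaves : ℝ)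
  | .leaf => by simp [Nb, numLeaves]
  | .node l r => by
      have ihl := Nb_le_real l
      have ihr := Nb_le_real r
      have h1 : (1:ℕ) ≤ l.numLeaves := one_le_numLeaves l
      have h2 : (1:ℕ) ≤ r.numLeaves := one_le_numLeaves r
      simp only [Nb, numLeaves]
      push_cast
      set a : ℝ := (l.numLeaves : ℝ) with hadef
      set b : ℝ := (r.numLeaves : ℝ) with hbdef
      have ha : (0:ℝ) < a := by rw [hadef]; exact_mod_cast h1
      have hb : (0:ℝ) < b := by rw [hbdef]; exact_mod_cast h2
      rcases le_total a b with hab | hab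
      · rw [min_eq_left hab]
        nlinarith [key_le ha hab]
      · rw [min_eq_right hab]
        have hk := key_le hb hab
        rw [add_comm b a] at hk
        nlinarith [hk]

lemma Nb_lt_real : ∀ (T : BTree) (h : ℕ), T.numLeaves = 2 ^ h → T ≠ fbTree h →
    2 * Real.log 2 * (Nb T : ℝ) < (T.numLeaves : ℝ) * Real.log (T.numLeaves : ℝ)
  | .leaf, h, hn, hne => by
      simp only [numLeaves] at hn
      have : h = 0 := by
        by_contra hh
        have : 2 ≤ 2 ^ h := Nat.one_lt_two_pow_iff.mpr hh
        omega
      subst this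
      exact absurd rfl hne
  | .node l r, h, hn, hne => by
      have h1 : (1:ℕ) ≤ l.numLeaves := one_le_numLeaves l
      have h2 : (1:ℕ) ≤ r.numLeaves := one_le_numLeaves r
      simp only [numLeaves] at hn ⊢
      have hh : h ≠ 0 := by
        rintro rfl; simp at hn; omega
      obtain ⟨k, rfl⟩ : ∃ k, h = k + 1 := ⟨h - 1, by omega⟩
      rw [pow_succ] at hn
      simp only [Nb]
      push_cast
      rcases eq_or_ne l.numLeaves r.numLeaves with hab | hab
      · -- equal sizes, both are 2 ^ k
        have hak : l.numLeaves = 2 ^ k := by omega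
        have hbk : r.numLeaves = 2 ^ k := by omega
        have hne' : l ≠ fbTree k ∨ r ≠ fbTree k := by
          by_contra hc
          push_neg at hc
          exact hne (by rw [hc.1, hc.2]; rfl)
        have habR : (r.numLeaves : ℝ) = (l.numLeaves : ℝ) := by exact_mod_cast hab.symm
        rw [habR, min_self]
        set a : ℝ := (l.numLeaves : ℝ) with hadef
        have ha : (0:ℝ) < a := by rw [hadef]; exact_mod_cast h1
        have keyeq := key_eq ha
        rcases hne' with hne' | hne'
        · have hl := Nb_lt_real l k hak hne'
          have hr := Nb_le_real r
          rw [habR] at hr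
          nlinarith [hl, hr, keyeq]
        · have hl := Nb_le_real l
          have hr := Nb_lt_real r k hbk hne'
          rw [habR] at hr
          nlinarith [hl, hr, keyeq]
      · have hl := Nb_le_real l
        have hr := Nb_le_real r
        set a : ℝ := (l.numLeaves : ℝ) with hadef
        set b : ℝ := (r.numLeaves : ℝ) with hbdef
        have ha : (0:ℝ) < a := by rw [hadef]; exact_mod_cast h1
        have hb : (0:ℝ) < b := by rw [hbdef]; exact_mod_cast h2
        rcases lt_or_gt_of_ne hab with h' | h'
        · have h'' : a < b := by rw [hadef, hbdef]; exact_mod_cast h'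
          rw [min_eq_left h''.le]
          nlinarith [key_lt ha h'']
        · have h'' : b < a := by rw [hadef, hbdef]; exact_mod_cast h'
          rw [min_eq_right h''.le]
          have hk := key_lt hb h''
          rw [add_comm b a] at hk
          nlinarith [hk]

lemma Nb_le_fb (T : BTree) (h : ℕ) (hn : T.numLeaves = 2 ^ h) : Nb T ≤ Nb (fbTree h) := by
  have hb := Nb_le_real T
  rw [hn] at hb
  push_cast at hb
  rw [Real.log_pow] at hb
  have hL : (0:ℝ) < Real.log 2 := Real.log_pos one_lt_two
  have key : (2 * Nb T : ℝ) ≤ ((h * 2 ^ h : ℕ) : ℝ) := by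
    push_cast
    nlinarith [hb, hL]
  have : 2 * Nb T ≤ h * 2 ^ h := by exact_mod_cast key
  have := two_mul_Nb_fbTree h
  omega

lemma Nb_lt_fb (T : BTree) (h : ℕ) (hn : T.numLeaves = 2 ^ h) (hne : T ≠ fbTree h) :
    Nb T < Nb (fbTree h) := by
  have hb := Nb_lt_real T h hn hne
  rw [hn] at hb
  push_cast at hb
  rw [Real.log_pow] at hb
  have hL : (0:ℝ) < Real.log 2 := Real.log_pos one_lt_two
  have key : (2 * Nb T : ℝ) < ((h * 2 ^ h : ℕ) : ℝ) := by
    push_cast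
    nlinarith [hb, hL]
  have : 2 * Nb T < h * 2 ^ h := by exact_mod_cast key
  have := two_mul_Nb_fbTree h
  omega

end BTreeAux


open BTree BTreeAux in
/-- `N_b` is a balance index: for every `n ≥ 1` the caterpillar is the
unique minimizer of `N_b` among trees with `n` leaves, and for every `n = 2^h` the
fully balanced tree of height `h` is the unique maximizer. -/
theorem Nb_is_balance_index :
    (∀ n : ℕ, 1 ≤ n → ∀ T : BTree, numLeaves T = n →
      Nb (catTree n) ≤ Nb T ∧ (Nb T = Nb (catTree n) ↔ isCaterpillar T)) ∧
    (∀ h : ℕ, ∀ T : BTree, numLeaves T = 2 ^ h →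
      Nb T ≤ Nb (fbTree h) ∧ (Nb T = Nb (fbTree h) ↔ T = fbTree h)) := by
  constructor
  · intro n hn T hT
    have hc := Nb_catTree n hn
    have hlow := numLeaves_le_Nb_succ T
    constructor
    · omega
    · constructor
      · intro he
        exact isCaterpillar_of_Nb T (by omega)
      · intro hcat
        have := Nb_of_isCaterpillar T hcat
        omega
  · intro h T hT
    refine ⟨Nb_le_fb T h hT, ?_, ?_⟩
    · intro he
      by_contra hne
      have := Nb_lt_fb T h hT hne
      omega
    · rintro rfl; rfl
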